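/- With D, g, D* as above, the commutator satisfies [D,D*] = Σ_{(i,j)∈𝒜} ( a_{ji}(λ_i − λ_j)( (g_j/g_i) e^j⊗e_i + e^i⊗e_j ) + (g_j/g_i) a_{ji}² ( e^j⊗e_j − e^i⊗e_i ) ). -/

import Mathlib

/-- The endomorphism `e^i ⊗ e_j` of `ℝ^n`, sending the standard basis vector `e i`
to `e j` and the other standard basis vectors to `0`. -/
noncomputable def elemEnd {n : ℕ} (i j : Fin n) : Module.End ℝ (Fin n → ℝ) :=
  (LinearMap.proj i : (Fin n → ℝ) →ₗ[ℝ] ℝ).smulRight (Pi.single j 1)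

/-! The adjoint with respect to the diagonal form `g` is computed termwise: the adjoint of
`e^i⊗e_j` is `(g_j/g_i) e^j⊗e_i`, and adjoints are unique because `g` is nondegenerate.
In the commutator, a product of two off-diagonal units coming from different pairs of `𝒜`
vanishes since their indices are disjoint, so besides the diagonal-times-off-diagonal terms
only the products of each unit with its own transpose survive. -/

open LinearMap Finset

section DiagonalForm

variable {ι K : Type*} [Fintype ι] [DecidableEq ι] [Field K]

noncomputable def diagonalForm (g : ι → K) : LinearMap.BilinForm K (ι → K) :=
  Matrix.toLinearMap₂' K (Matrix.diagonal g)

theorem diagonalForm_apply (g x y : ι → K) : diagonalForm g x y = ∑ i, g i * x i * y i := by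
  simp only [diagonalForm, Matrix.toLinearMap₂'_apply', Matrix.mulVec_diagonal, dotProduct]
  exact sum_congr rfl fun i _ => by ring

theorem diagonalForm_separatingRight {g : ι → K} (hg : ∀ i, g i ≠ 0) :
    (diagonalForm g).SeparatingRight :=
  separatingRight_toLinearMap₂'_of_det_ne_zero' <| by
    simpa [Matrix.det_diagonal, prod_ne_zero_iff] using hg

end DiagonalForm

namespace LinearMap

variable {R M M₁ M₂ : Type*} [CommRing R] [AddCommGroup M] [Module R M]
  [AddCommGroup M₁] [Module R M₁] [AddCommGroup M₂] [Module R M₂]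
  {B : M →ₗ[R] M →ₗ[R] M₂} {B' : M₁ →ₗ[R] M₁ →ₗ[R] M₂}

theorem IsAdjointPair.eq_of_separatingRight (hB : B.SeparatingRight) {f : M → M₁}
    {g g' : M₁ →ₗ[R] M} (h : IsAdjointPair B B' f g) (h' : IsAdjointPair B B' f g') : g = g' := by
  ext y
  refine sub_eq_zero.mp (hB _ fun x => ?_)
  rw [map_sub, ← h, ← h', sub_self]

theorem isAdjointPair_sum {ι : Type*} (s : Finset ι) {f : ι → M →ₗ[R] M₁} {g : ι → M₁ →ₗ[R] M}
    (h : ∀ i ∈ s, IsAdjointPair B B' (f i) (g i)) :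
    IsAdjointPair B B' ⇑(∑ i ∈ s, f i) ⇑(∑ i ∈ s, g i) := fun x y => by
  simp only [LinearMap.sum_apply, map_sum]
  exact sum_congr rfl fun i hi => h i hi x y

end LinearMap

section ElemEnd

variable {n : ℕ}

theorem elemEnd_apply (i j : Fin n) (x : Fin n → ℝ) :
    elemEnd i j x = x i • (Pi.single j 1 : Fin n → ℝ) := rfl

theorem elemEnd_mul_elemEnd (i j k l : Fin n) :
    elemEnd i j * elemEnd k l = if l = i then elemEnd k j else 0 := by
  refine LinearMap.ext fun x => funext fun m => ?_
  by_cases h : l = i <;> simp [h, Pi.single_apply, elemEnd_apply]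

theorem diag_mul_elemEnd (lam : Fin n → ℝ) (k l : Fin n) :
    (∑ i, lam i • elemEnd i i) * elemEnd k l = lam l • elemEnd k l := by
  simp [sum_mul, elemEnd_mul_elemEnd]

theorem elemEnd_mul_diag (lam : Fin n → ℝ) (k l : Fin n) :
    elemEnd k l * (∑ i, lam i • elemEnd i i) = lam k • elemEnd k l := by
  simp [mul_sum, elemEnd_mul_elemEnd]

theorem sum_smul_elemEnd_mul_sum_smul_elemEnd {ι : Type*} {s : Finset ι} {f h : ι → Fin n}
    (hf : Set.InjOn f s) (b c : ι → ℝ) :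
    (∑ k ∈ s, b k • elemEnd (f k) (h k)) * (∑ k ∈ s, c k • elemEnd (h k) (f k)) =
      ∑ k ∈ s, (b k * c k) • elemEnd (h k) (h k) := by
  rw [sum_mul_sum]
  refine sum_congr rfl fun i hi => ?_
  rw [sum_eq_single_of_mem i hi fun j hj hji => ?_]
  · rw [smul_mul_smul_comm, elemEnd_mul_elemEnd, if_pos rfl]
  · rw [smul_mul_smul_comm, elemEnd_mul_elemEnd, if_neg fun hfji => hji (hf hj hi hfji), smul_zero]

theorem isAdjointPair_diagonalForm_smul_elemEnd {g : Fin n → ℝ} {i : Fin n}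
    (hi : g i ≠ 0) (j : Fin n) (c : ℝ) :
    IsAdjointPair (diagonalForm g) (diagonalForm g) (c • elemEnd i j)
      ((g j / g i * c) • elemEnd j i) := fun x y => by
  simp only [Pi.smul_apply, elemEnd_apply, map_smul, LinearMap.smul_apply, diagonalForm_apply,
    Pi.single_apply, mul_ite, mul_one, mul_zero, ite_mul, zero_mul, sum_ite_eq', mem_univ,
    ↓reduceIte, smul_eq_mul]
  field_simp

theorem isAdjointPair_diagonalForm_diag_add_offDiag {g : Fin n → ℝ} (hg : ∀ i, g i ≠ 0)
    (lam : Fin n → ℝ) (s : Finset (Fin n × Fin n)) (a : Fin n × Fin n → ℝ) :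
    IsAdjointPair (diagonalForm g) (diagonalForm g)
      ⇑((∑ i, lam i • elemEnd i i) + ∑ p ∈ s, a p • elemEnd p.1 p.2)
      ⇑((∑ i, lam i • elemEnd i i) + ∑ p ∈ s, (g p.2 / g p.1 * a p) • elemEnd p.2 p.1) := by
  refine (isAdjointPair_sum _ fun i _ => ?_).add
    (isAdjointPair_sum _ fun p _ => isAdjointPair_diagonalForm_smul_elemEnd (hg p.1) p.2 (a p))
  simpa [hg i] using isAdjointPair_diagonalForm_smul_elemEnd (hg i) i (lam i)

theorem diag_mul_sum_smul_elemEnd {ι : Type*} (s : Finset ι) (f h : ι → Fin n)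
    (lam : Fin n → ℝ) (c : ι → ℝ) :
    (∑ i, lam i • elemEnd i i) * (∑ k ∈ s, c k • elemEnd (f k) (h k)) =
      ∑ k ∈ s, (c k * lam (h k)) • elemEnd (f k) (h k) := by
  simp only [mul_sum, mul_smul_comm, diag_mul_elemEnd, smul_smul]

theorem sum_smul_elemEnd_mul_diag {ι : Type*} (s : Finset ι) (f h : ι → Fin n)
    (lam : Fin n → ℝ) (c : ι → ℝ) :
    (∑ k ∈ s, c k • elemEnd (f k) (h k)) * (∑ i, lam i • elemEnd i i) =
      ∑ k ∈ s, (c k * lam (f k)) • elemEnd (f k) (h k) := by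
  simp only [sum_mul, smul_mul_assoc, elemEnd_mul_diag, smul_smul]

theorem commutator_diag_add_offDiag {ι : Type*} {s : Finset ι} {f h : ι → Fin n}
    (hf : Set.InjOn f s) (hh : Set.InjOn h s) (lam : Fin n → ℝ) (b c : ι → ℝ) :
    ((∑ i, lam i • elemEnd i i) + ∑ k ∈ s, b k • elemEnd (f k) (h k)) *
        ((∑ i, lam i • elemEnd i i) + ∑ k ∈ s, c k • elemEnd (h k) (f k)) -
      ((∑ i, lam i • elemEnd i i) + ∑ k ∈ s, c k • elemEnd (h k) (f k)) *
        ((∑ i, lam i • elemEnd i i) + ∑ k ∈ s, b k • elemEnd (f k) (h k)) =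
      ∑ k ∈ s, ((lam (f k) - lam (h k)) • (c k • elemEnd (h k) (f k) + b k • elemEnd (f k) (h k)) +
        (b k * c k) • (elemEnd (h k) (h k) - elemEnd (f k) (f k))) := by
  set Λ := ∑ i, lam i • elemEnd i i
  set N := ∑ k ∈ s, b k • elemEnd (f k) (h k)
  set M := ∑ k ∈ s, c k • elemEnd (h k) (f k)
  have expand : (Λ + N) * (Λ + M) - (Λ + M) * (Λ + N) =
      (Λ * M + N * Λ + N * M) - (M * Λ + Λ * N + M * N) := by noncomm_ring
  rw [expand, diag_mul_sum_smul_elemEnd, sum_smul_elemEnd_mul_diag,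
    sum_smul_elemEnd_mul_sum_smul_elemEnd hf, sum_smul_elemEnd_mul_diag, diag_mul_sum_smul_elemEnd,
    sum_smul_elemEnd_mul_sum_smul_elemEnd hh]
  simp only [← sum_add_distrib, ← sum_sub_distrib]
  refine sum_congr rfl fun k _ => ?_
  match_scalars <;> ring

end ElemEnd

theorem commutator_with_adjoint_general
    {n : ℕ} (𝒜 : Finset (Fin n × Fin n))
    (hA₂ : ∀ p ∈ 𝒜, ∀ q ∈ 𝒜, p ≠ q →
      p.1 ≠ q.1 ∧ p.1 ≠ q.2 ∧ p.2 ≠ q.1 ∧ p.2 ≠ q.2)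
    (lam : Fin n → ℝ) (a : Fin n × Fin n → ℝ)
    (D : Module.End ℝ (Fin n → ℝ))
    (hD : D = (∑ i, lam i • elemEnd i i) + ∑ p ∈ 𝒜, a p • elemEnd p.1 p.2)
    (gv : Fin n → ℝ) (hg : ∀ i, gv i ≠ 0)
    (Dstar : Module.End ℝ (Fin n → ℝ))
    (hadj : ∀ x y : Fin n → ℝ,
      (∑ i, gv i * (D x) i * y i) = ∑ i, gv i * x i * (Dstar y) i) :
    D * Dstar - Dstar * D =
      ∑ p ∈ 𝒜, ((a p * (lam p.1 - lam p.2)) •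
          ((gv p.2 / gv p.1) • elemEnd p.2 p.1 + elemEnd p.1 p.2) +
        (gv p.2 / gv p.1 * a p ^ 2) • (elemEnd p.2 p.2 - elemEnd p.1 p.1)) := by
  have hDstar : Dstar =
      (∑ i, lam i • elemEnd i i) + ∑ p ∈ 𝒜, (gv p.2 / gv p.1 * a p) • elemEnd p.2 p.1 := by
    refine IsAdjointPair.eq_of_separatingRight (diagonalForm_separatingRight hg) (f := D)
      (fun x y => ?_) (hD ▸ isAdjointPair_diagonalForm_diag_add_offDiag hg lam 𝒜 a)
    simpa only [diagonalForm_apply] using hadj x y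
  have hfst : Set.InjOn Prod.fst (𝒜 : Set (Fin n × Fin n)) := fun p hp q hq h =>
    by_contra fun hpq => (hA₂ p hp q hq hpq).1 h
  have hsnd : Set.InjOn Prod.snd (𝒜 : Set (Fin n × Fin n)) := fun p hp q hq h =>
    by_contra fun hpq => (hA₂ p hp q hq hpq).2.2.2 h
  rw [hDstar, hD, commutator_diag_add_offDiag hfst hsnd]
  refine sum_congr rfl fun p _ => ?_
  match_scalars <;> ring

/-- The commutator `[D, D*]` of `D = Σ λ_i e^i⊗e_i + Σ_{(i,j)∈𝒜} a_{ji} e^i⊗e_j` with its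
adjoint with respect to the diagonal metric `g = Σ g_i e^i⊗e^i`. -/
theorem commutator_with_adjoint
    {n : ℕ} (hn : 1 ≤ n) (𝒜 : Finset (Fin n × Fin n))
    (hA₁ : ∀ p ∈ 𝒜, p.1 ≠ p.2)
    (hA₂ : ∀ p ∈ 𝒜, ∀ q ∈ 𝒜, p ≠ q →
      p.1 ≠ q.1 ∧ p.1 ≠ q.2 ∧ p.2 ≠ q.1 ∧ p.2 ≠ q.2)
    (lam : Fin n → ℝ) (a : Fin n × Fin n → ℝ) (ha : ∀ p ∈ 𝒜, a p ≠ 0)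
    (D : Module.End ℝ (Fin n → ℝ))
    (hD : D = (∑ i, lam i • elemEnd i i) + ∑ p ∈ 𝒜, a p • elemEnd p.1 p.2)
    (gv : Fin n → ℝ) (hg : ∀ i, gv i ≠ 0)
    (Dstar : Module.End ℝ (Fin n → ℝ))
    (hadj : ∀ x y : Fin n → ℝ,
      (∑ i, gv i * (D x) i * y i) = ∑ i, gv i * x i * (Dstar y) i) :
    D * Dstar - Dstar * D =
      ∑ p ∈ 𝒜, ((a p * (lam p.1 - lam p.2)) •
          ((gv p.2 / gv p.1) • elemEnd p.2 p.1 + elemEnd p.1 p.2) +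
        (gv p.2 / gv p.1 * a p ^ 2) • (elemEnd p.2 p.2 - elemEnd p.1 p.1)) :=
  commutator_with_adjoint_general 𝒜 hA₂ lam a D hD gv hg Dstar hadj
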